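/- arXiv:2103.15560 — 4 statements merged into one kernel-verified Lean document; each statement's English description precedes it below -/
import Mathlib

section
/- For the cycle graph C_n with n an odd natural number at least 3, the minimum size of a doubly resolving set of C_n is 2. -/
open SimpleGraph

/-- `Q` is a resolving set of `G`: distinct vertices have distinct distance vectors to `Q`. -/
def IsResolving {V : Type*} (G : SimpleGraph V) (Q : Finset V) : Prop :=
  ∀ x y : V, (∀ q ∈ Q, G.dist x q = G.dist y q) → x = y

/-- `Q` is a doubly resolving set of `G`. -/
def IsDoublyResolving {V : Type*} (G : SimpleGraph V) (Q : Finset V) : Prop :=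
  ∀ x y : V, x ≠ y → ∃ u ∈ Q, ∃ v ∈ Q,
    (G.dist x u : ℤ) - (G.dist x v : ℤ) ≠ (G.dist y u : ℤ) - (G.dist y v : ℤ)

/-- `Q` is a strong resolving set of `G`: for distinct `p q` some `r ∈ Q` has
`p` on a shortest `q`–`r` path or `q` on a shortest `p`–`r` path. -/
def IsStrongResolving {V : Type*} (G : SimpleGraph V) (Q : Finset V) : Prop :=
  ∀ p q : V, p ≠ q → ∃ r ∈ Q,
    G.dist q r = G.dist q p + G.dist p r ∨ G.dist p r = G.dist p q + G.dist q r

section aux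

open Fin.NatCast Fin.CommRing

variable {n : ℕ} [NeZero n]

omit [NeZero n] in
lemma val_sub' (x y : Fin n) :
    (x - y).val = if y.val ≤ x.val then x.val - y.val else x.val + n - y.val := by
  rw [Fin.sub_def]
  show (n - y.val + x.val) % n = _
  have hx := x.isLt
  have hy := y.isLt
  rcases le_or_gt y.val x.val with h | h
  · have he : n - y.val + x.val = (x.val - y.val) + n := by omega
    rw [he, Nat.add_mod_right, Nat.mod_eq_of_lt (by omega), if_pos h]
  · rw [Nat.mod_eq_of_lt (by omega), if_neg (by omega)]
    omega

lemma val_one_of_two_le (hn : 2 ≤ n) : ((1 : Fin n) : ℕ) = 1 := by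
  rw [Fin.val_one']
  exact Nat.mod_eq_of_lt (by omega)

lemma exists_walk_cycle (hn : 2 ≤ n) (u : Fin n) (m : ℕ) :
    ∃ W : (cycleGraph n).Walk u (u + (m : Fin n)), W.length = m := by
  induction m with
  | zero =>
    exact ⟨SimpleGraph.Walk.nil.copy rfl (by push_cast; ring), by simp⟩
  | succ m ih =>
    obtain ⟨W, hW⟩ := ih
    have hadj : (cycleGraph n).Adj (u + (m : Fin n)) (u + ((m + 1 : ℕ) : Fin n)) := by
      rw [cycleGraph_adj']
      right
      have h1 : u + ((m + 1 : ℕ) : Fin n) - (u + (m : Fin n)) = 1 := by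
        push_cast
        ring
      rw [h1, val_one_of_two_le hn]
    exact ⟨W.append hadj.toWalk, by simp [hW]⟩

lemma cycle_dist_le (hn : 2 ≤ n) (u v : Fin n) :
    (cycleGraph n).dist u v ≤ (v - u).val := by
  obtain ⟨W, hW⟩ := exists_walk_cycle hn u ((v - u).val)
  have h : u + (((v - u).val : ℕ) : Fin n) = v := by
    rw [Fin.cast_val_eq_self]
    ring
  have hd := SimpleGraph.dist_le (W.copy rfl h)
  rwa [SimpleGraph.Walk.length_copy, hW] at hd

lemma cycle_reachable (hn : 2 ≤ n) (u v : Fin n) : (cycleGraph n).Reachable u v := by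
  obtain ⟨W, _⟩ := exists_walk_cycle hn u ((v - u).val)
  have h : u + (((v - u).val : ℕ) : Fin n) = v := by
    rw [Fin.cast_val_eq_self]; ring
  exact ⟨W.copy rfl h⟩

lemma val_neg' (x : Fin n) :
    (-x).val = if x.val = 0 then 0 else n - x.val := by
  have h : -x = 0 - x := by ring
  rw [h, val_sub']
  rw [Fin.val_zero]
  have := x.isLt
  split_ifs <;> omega

lemma key1 (hn : 2 ≤ n) (A : Fin n) :
    min ((A + 1).val) ((-(A + 1)).val) ≤ min A.val ((-A).val) + 1 := by
  rcases eq_or_ne A 0 with rfl | hA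
  · have h1 : ((0 : Fin n) + 1).val = 1 := by
      rw [zero_add, val_one_of_two_le hn]
    have := min_le_left (((0:Fin n) + 1).val) ((-((0:Fin n) + 1)).val)
    omega
  · have hAv : 0 < A.val := by
      rcases Nat.eq_zero_or_pos A.val with h | h
      · exact absurd (Fin.ext h) hA
      · exact h
    have hlt := A.isLt
    have h1 : (A + 1).val ≤ A.val + 1 := by
      rw [Fin.add_def, val_one_of_two_le hn]
      exact Nat.mod_le _ _
    have hnegA : (-A).val = n - A.val := by
      rw [val_neg', if_neg (by omega)]
    have hform : -(A + 1) = (-A) - 1 := by ring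
    have h2 : (-(A + 1)).val = (-A).val - 1 := by
      rw [hform, val_sub', val_one_of_two_le hn, if_pos (by omega)]
    have key : ∀ p q x y : ℕ, p ≤ x + 1 → q = y - 1 → 1 ≤ y →
        min p q ≤ min x y + 1 := by
      intro p q x y hp hq hy
      omega
    exact key _ _ _ _ h1 h2 (by omega)

lemma key2 (hn : 2 ≤ n) (A : Fin n) :
    min A.val ((-A).val) ≤ min ((A + 1).val) ((-(A + 1)).val) + 1 := by
  have h := key1 hn (-(A + 1))
  have e1 : -(A + 1) + 1 = -A := by ring
  rw [e1, neg_neg, neg_neg] at h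
  have swap : ∀ p q r s : ℕ, min p q ≤ min r s + 1 → min q p ≤ min s r + 1 := by
    intro p q r s hprs
    omega
  exact swap _ _ _ _ h

lemma cycle_walk_lb (hn : 2 ≤ n) {u v : Fin n} (W : (cycleGraph n).Walk u v) :
    min ((v - u).val) ((u - v).val) ≤ W.length := by
  induction W with
  | nil => simp
  | @cons u w v h W ih =>
    rw [SimpleGraph.Walk.length_cons]
    rcases (cycleGraph_adj').mp h with h1 | h1
    · -- (u - w).val = 1, so u = w + 1
      have hu : u = w + 1 := by
        have he : u - w = 1 := Fin.ext (by rw [h1, val_one_of_two_le hn])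
        have := sub_eq_iff_eq_add.mp he
        rw [this]; ring
      subst hu
      have e1 : v - (w + 1) = (v - w) - 1 := by ring
      have e2 : (w + 1) - v = (w - v) + 1 := by ring
      have hk := key2 hn ((v - w) - 1)
      have e3 : ((v - w) - 1) + 1 = v - w := by ring
      have e4 : -((v - w) - 1) = (w - v) + 1 := by ring
      have e5 : -(v - w) = w - v := by ring
      rw [e3, e4, e5] at hk
      rw [e1, e2]
      exact hk.trans (Nat.add_le_add_right ih 1)
    · -- (w - u).val = 1, so w = u + 1
      have hw : w = u + 1 := by
        have he : w - u = 1 := Fin.ext (by rw [h1, val_one_of_two_le hn])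
        have := sub_eq_iff_eq_add.mp he
        rw [this]; ring
      subst hw
      have e1 : v - (u + 1) = (v - u) - 1 := by ring
      have e2 : (u + 1) - v = (u - v) + 1 := by ring
      rw [e1, e2] at ih
      have hk := key1 hn (v - u - 1)
      have e3 : (v - u - 1) + 1 = v - u := by ring
      have e4 : -(v - u - 1) = (u - v) + 1 := by ring
      have e5 : -(v - u) = u - v := by ring
      rw [e3, e4, e5] at hk
      exact hk.trans (Nat.add_le_add_right ih 1)

lemma cycle_dist_eq (hn : 2 ≤ n) (u v : Fin n) :
    (cycleGraph n).dist u v = min ((v - u).val) ((u - v).val) := by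
  apply le_antisymm
  · refine le_min (cycle_dist_le hn u v) ?_
    rw [SimpleGraph.dist_comm]
    exact cycle_dist_le hn v u
  · obtain ⟨W, hW⟩ := (cycle_reachable hn u v).exists_walk_length_eq_dist
    exact hW ▸ cycle_walk_lb hn W

end aux

theorem stmt2 (n : ℕ) (hn : 3 ≤ n) (ho : Odd n) :
    IsLeast {m : ℕ | ∃ Q, IsDoublyResolving (cycleGraph n) Q ∧ Q.card = m} (2) := by
  haveI : NeZero n := ⟨by omega⟩
  obtain ⟨k, hk⟩ := ho
  have hk1 : 1 ≤ k := by omega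
  have hn2 : 2 ≤ n := by omega
  set kf : Fin n := ⟨k, by omega⟩ with hkf
  have h0k : (0 : Fin n) ≠ kf := by
    intro h
    have h' : (0 : ℕ) = k := by simpa [hkf] using congrArg Fin.val h
    omega
  constructor
  · -- {0, kf} is a doubly resolving set of size 2
    refine ⟨{0, kf}, ?_, ?_⟩
    · intro x y hxy
      refine ⟨0, by simp, kf, by simp, ?_⟩
      have hax := x.isLt
      have hbx := y.isLt
      have hab : x.val ≠ y.val := fun h => hxy (Fin.ext h)
      have dist0 : ∀ z : Fin n, (cycleGraph n).dist z 0 = min z.val (n - z.val) := by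
        intro z
        rw [cycle_dist_eq hn2, val_sub', val_sub']
        have := z.isLt
        rw [Fin.val_zero]
        split_ifs <;> omega
      have distk : ∀ z : Fin n, (cycleGraph n).dist z kf =
          if z.val ≤ k then k - z.val else z.val - k := by
        intro z
        rw [cycle_dist_eq hn2, val_sub', val_sub']
        have := z.isLt
        have hkv : kf.val = k := rfl
        rw [hkv]
        split_ifs <;> omega
      rw [dist0 x, dist0 y, distk x, distk y]
      split_ifs <;> omega
    · rw [Finset.card_insert_of_notMem (by simpa using h0k), Finset.card_singleton]
  · -- lower bound
    rintro m ⟨Q, hQ, rfl⟩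
    by_contra h
    push_neg at h
    have hle : Q.card ≤ 1 := by omega
    have h01 : (0 : Fin n) ≠ (1 : Fin n) := by
      intro h'
      have h'' := congrArg Fin.val h'
      rw [Fin.val_zero, val_one_of_two_le hn2] at h''
      omega
    obtain ⟨u, hu, v, hv, hne⟩ := hQ 0 1 h01
    have huv : u = v := Finset.card_le_one.mp hle u hu v hv
    subst huv
    simp at hne
end

section
/- If n ≥ 4 is even and k ≥ 3, then the metric dimension of the Cartesian product C_n □ P_k is 3. -/
open SimpleGraph

lemma finSubVal {n : ℕ} (a b : Fin n) :
    (b.val ≤ a.val ∧ (a - b).val = a.val - b.val) ∨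
    (a.val < b.val ∧ (a - b).val = a.val + n - b.val) := by
  have ha := a.is_lt
  have hb := b.is_lt
  rw [Fin.sub_def]
  rcases le_or_gt b.val a.val with h | h
  · left
    refine ⟨h, ?_⟩
    simp only
    have : n - b.val + a.val = n + (a.val - b.val) := by omega
    rw [this, Nat.add_mod_left, Nat.mod_eq_of_lt (by omega)]
  · right
    refine ⟨h, ?_⟩
    simp only
    rw [Nat.mod_eq_of_lt (by omega)]
    omega

lemma finAddVal {n : ℕ} (a b : Fin n) :
    (a.val + b.val < n ∧ (a + b).val = a.val + b.val) ∨
    (n ≤ a.val + b.val ∧ (a + b).val = a.val + b.val - n) := by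
  have ha := a.is_lt
  have hb := b.is_lt
  rw [Fin.add_def]
  rcases lt_or_ge (a.val + b.val) n with h | h
  · left
    exact ⟨h, Nat.mod_eq_of_lt h⟩
  · right
    refine ⟨h, ?_⟩
    simp only
    rw [Nat.mod_eq_sub_mod h, Nat.mod_eq_of_lt (by omega)]

lemma cycleWalk {n : ℕ} (hn : 2 ≤ n) :
    ∀ (t : ℕ) (i j : Fin n), (j - i).val = t → ∃ w : (cycleGraph n).Walk i j, w.length = t := by
  intro t
  induction t with
  | zero =>
    intro i j h
    have hij : i = j := by
      have h1 := finSubVal j i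
      have h2 := i.is_lt
      have h3 := j.is_lt
      exact Fin.ext (by omega)
    subst hij
    exact ⟨SimpleGraph.Walk.nil, rfl⟩
  | succ t ih =>
    intro i j h
    set i' : Fin n := i + ⟨1, by omega⟩ with hi'
    have hval : i'.val = (i.val + 1) % n := by
      rw [hi', Fin.add_def]
    have hvalc : (i.val + 1 < n ∧ i'.val = i.val + 1) ∨ (i.val + 1 = n ∧ i'.val = 0) := by
      have := i.is_lt
      rcases lt_or_ge (i.val + 1) n with h2 | h2
      · left; exact ⟨h2, by rw [hval, Nat.mod_eq_of_lt h2]⟩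
      · right
        have : i.val + 1 = n := by omega
        refine ⟨this, ?_⟩
        rw [hval, this, Nat.mod_self]
    have hadj : (cycleGraph n).Adj i i' := by
      rw [cycleGraph_adj']
      right
      have := finSubVal i' i
      omega
    have hstep : (j - i').val = t := by
      have h1 := finSubVal j i'
      have h2 := finSubVal j i
      have := j.is_lt
      have := i.is_lt
      omega
    obtain ⟨w, hw⟩ := ih i' j hstep
    exact ⟨SimpleGraph.Walk.cons hadj w, by simp [hw]⟩

lemma cycleWalkLB {n : ℕ} (hn : 2 ≤ n) {i j : Fin n} (w : (cycleGraph n).Walk i j) :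
    min (j - i).val (i - j).val ≤ w.length := by
  induction w with
  | nil =>
    rename_i u
    have := finSubVal u u
    omega
  | @cons u v z hadj p ih =>
    rw [SimpleGraph.Walk.length_cons]
    rw [cycleGraph_adj'] at hadj
    have h1 := finSubVal z u
    have h2 := finSubVal u z
    have h3 := finSubVal z v
    have h4 := finSubVal v z
    have h5 := finSubVal u v
    have h6 := finSubVal v u
    have := u.is_lt
    have := v.is_lt
    have := z.is_lt
    omega

lemma cycleDist {n : ℕ} (hn : 2 ≤ n) (i j : Fin n) :
    (cycleGraph n).dist i j = min (j - i).val (i - j).val := by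
  obtain ⟨w1, hw1⟩ := cycleWalk hn _ i j rfl
  obtain ⟨w2, hw2⟩ := cycleWalk hn _ j i rfl
  have hr : (cycleGraph n).Reachable i j := ⟨w1⟩
  apply le_antisymm
  · apply le_min
    · exact hw1 ▸ SimpleGraph.dist_le w1
    · rw [SimpleGraph.dist_comm]
      exact hw2 ▸ SimpleGraph.dist_le w2
  · obtain ⟨p, hp⟩ := hr.exists_walk_length_eq_dist
    exact hp ▸ cycleWalkLB hn p

lemma pathWalk {k : ℕ} : ∀ (t : ℕ) (i j : Fin k), j.val = i.val + t →
    ∃ w : (pathGraph k).Walk i j, w.length = t := by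
  intro t
  induction t with
  | zero =>
    intro i j h
    have : i = j := Fin.ext (by omega)
    subst this
    exact ⟨SimpleGraph.Walk.nil, rfl⟩
  | succ t ih =>
    intro i j h
    have hj := j.is_lt
    set i' : Fin k := ⟨i.val + 1, by omega⟩ with hi'
    have hadj : (pathGraph k).Adj i i' := by
      rw [pathGraph_adj]; left; rfl
    obtain ⟨w, hw⟩ := ih i' j (by simp [hi']; omega)
    exact ⟨SimpleGraph.Walk.cons hadj w, by simp [hw]⟩

lemma pathWalkLB {k : ℕ} {i j : Fin k} (w : (pathGraph k).Walk i j) :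
    i.val - j.val + (j.val - i.val) ≤ w.length := by
  induction w with
  | nil => omega
  | @cons u v z hadj p ih =>
    rw [SimpleGraph.Walk.length_cons]
    rw [pathGraph_adj] at hadj
    omega

lemma pathDist {k : ℕ} (i j : Fin k) :
    (pathGraph k).dist i j = i.val - j.val + (j.val - i.val) := by
  rcases le_total i.val j.val with h | h
  · obtain ⟨w, hw⟩ := pathWalk (j.val - i.val) i j (by omega)
    have hr : (pathGraph k).Reachable i j := ⟨w⟩
    apply le_antisymm
    · calc (pathGraph k).dist i j ≤ w.length := SimpleGraph.dist_le w
        _ = _ := by omega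
    · obtain ⟨p, hp⟩ := hr.exists_walk_length_eq_dist
      exact hp ▸ pathWalkLB p
  · obtain ⟨w, hw⟩ := pathWalk (i.val - j.val) j i (by omega)
    have hr : (pathGraph k).Reachable i j := ⟨w.reverse⟩
    apply le_antisymm
    · calc (pathGraph k).dist i j ≤ w.reverse.length := SimpleGraph.dist_le w.reverse
        _ = _ := by rw [SimpleGraph.Walk.length_reverse]; omega
    · obtain ⟨p, hp⟩ := hr.exists_walk_length_eq_dist
      exact hp ▸ pathWalkLB p

lemma boxWalkLB {α β : Type*} {G : SimpleGraph α} {H : SimpleGraph β}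
    (hG : G.Connected) (hH : H.Connected) :
    ∀ {x y : α × β} (w : (G □ H).Walk x y),
      G.dist x.1 y.1 + H.dist x.2 y.2 ≤ w.length := by
  intro x y w
  induction w with
  | nil => simp
  | @cons u v z hadj p ih =>
    rw [SimpleGraph.Walk.length_cons]
    rcases SimpleGraph.boxProd_adj.mp hadj with ⟨h1, h2⟩ | ⟨h1, h2⟩
    · have t1 : G.dist u.1 z.1 ≤ G.dist u.1 v.1 + G.dist v.1 z.1 := hG.dist_triangle
      have t2 : G.dist u.1 v.1 = 1 := SimpleGraph.dist_eq_one_iff_adj.mpr h1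
      have t3 : H.dist u.2 z.2 = H.dist v.2 z.2 := by rw [h2]
      omega
    · have t1 : H.dist u.2 z.2 ≤ H.dist u.2 v.2 + H.dist v.2 z.2 := hH.dist_triangle
      have t2 : H.dist u.2 v.2 = 1 := SimpleGraph.dist_eq_one_iff_adj.mpr h1
      have t3 : G.dist u.1 z.1 = G.dist v.1 z.1 := by rw [h2]
      omega

lemma boxDist {α β : Type*} {G : SimpleGraph α} {H : SimpleGraph β}
    (hG : G.Connected) (hH : H.Connected) (x y : α × β) :
    (G □ H).dist x y = G.dist x.1 y.1 + H.dist x.2 y.2 := by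
  obtain ⟨w1, hw1⟩ := (hG x.1 y.1).exists_walk_length_eq_dist
  obtain ⟨w2, hw2⟩ := (hH x.2 y.2).exists_walk_length_eq_dist
  apply le_antisymm
  · refine le_trans (SimpleGraph.dist_le
      (((w1.boxProdLeft H x.2).append (w2.boxProdRight G y.1)).copy (by simp) (by simp))) ?_
    have l1 : (w1.boxProdLeft H x.2).length = w1.length := SimpleGraph.Walk.length_map _ _
    have l2 : (w2.boxProdRight G y.1).length = w2.length := SimpleGraph.Walk.length_map _ _
    rw [SimpleGraph.Walk.length_copy, SimpleGraph.Walk.length_append, l1, l2, hw1, hw2]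
  · obtain ⟨p, hp⟩ := ((hG.boxProd hH) x y).exists_walk_length_eq_dist
    exact hp ▸ boxWalkLB hG hH p

lemma cycleConnected {n : ℕ} (hn : 2 ≤ n) : (cycleGraph n).Connected := by
  haveI : Nonempty (Fin n) := ⟨⟨0, by omega⟩⟩
  exact ⟨fun u v => (cycleWalk hn _ u v rfl).elim (fun w _ => ⟨w⟩)⟩

lemma pathConnected {k : ℕ} (hk : 1 ≤ k) : (pathGraph k).Connected := by
  haveI : Nonempty (Fin k) := ⟨⟨0, by omega⟩⟩
  refine ⟨fun u v => ?_⟩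
  rcases le_total u.val v.val with h | h
  · exact (pathWalk (v.val - u.val) u v (by omega)).elim (fun w _ => ⟨w⟩)
  · exact (pathWalk (u.val - v.val) v u (by omega)).elim (fun w _ => ⟨w.reverse⟩)

lemma prodDist {n k : ℕ} (hn : 2 ≤ n) (hk : 1 ≤ k) {i a : Fin n} {j b : Fin k} :
    (cycleGraph n □ pathGraph k).dist (i, j) (a, b) =
      min (a - i).val (i - a).val + (j.val - b.val + (b.val - j.val)) := by
  rw [boxDist (cycleConnected hn) (pathConnected hk)]
  simp only
  rw [cycleDist hn, pathDist]



lemma distPairEq {n k : ℕ} (hn2 : 2 ≤ n) (hk1 : 1 ≤ k) {x1 y1 a : Fin n} {x2 y2 b : Fin k}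
    (h : min (a - x1).val (x1 - a).val + (x2.val - b.val + (b.val - x2.val))
       = min (a - y1).val (y1 - a).val + (y2.val - b.val + (b.val - y2.val))) :
    (cycleGraph n □ pathGraph k).dist (x1, x2) (a, b)
      = (cycleGraph n □ pathGraph k).dist (y1, y2) (a, b) := by
  rw [prodDist hn2 hk1, prodDist hn2 hk1]
  exact h

lemma pairNe1 {α β : Type*} {x1 y1 : α} {x2 y2 : β} (h : x1 ≠ y1) : (x1, x2) ≠ (y1, y2) := by
  intro hcon
  exact h (congrArg Prod.fst hcon)

lemma pairNe2 {α β : Type*} {x1 y1 : α} {x2 y2 : β} (h : x2 ≠ y2) : (x1, x2) ≠ (y1, y2) := by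
  intro hcon
  exact h (congrArg Prod.snd hcon)

set_option maxHeartbeats 1600000 in
lemma pureA (n m : ℕ) (hn : 4 ≤ n) (hm : n = m + m)
    (va vc e w1 w2 s1 s2 s3 s4 t1 t2 t3 t4 : ℕ)
    (hva : va < n) (hvc : vc < n)
    (hesp : (va ≤ vc ∧ e = vc - va) ∨ (vc < va ∧ e = vc + n - va))
    (he : e = 0 ∨ e = m)
    (hw1 : (va + 1 < n ∧ w1 = va + 1) ∨ (n ≤ va + 1 ∧ w1 = va + 1 - n))
    (hw2 : (1 ≤ va ∧ w2 = va - 1) ∨ (va < 1 ∧ w2 = va + n - 1))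
    (hs1 : (w1 ≤ va ∧ s1 = va - w1) ∨ (va < w1 ∧ s1 = va + n - w1))
    (hs2 : (va ≤ w1 ∧ s2 = w1 - va) ∨ (w1 < va ∧ s2 = w1 + n - va))
    (hs3 : (w2 ≤ va ∧ s3 = va - w2) ∨ (va < w2 ∧ s3 = va + n - w2))
    (hs4 : (va ≤ w2 ∧ s4 = w2 - va) ∨ (w2 < va ∧ s4 = w2 + n - va))
    (ht1 : (w1 ≤ vc ∧ t1 = vc - w1) ∨ (vc < w1 ∧ t1 = vc + n - w1))
    (ht2 : (vc ≤ w1 ∧ t2 = w1 - vc) ∨ (w1 < vc ∧ t2 = w1 + n - vc))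
    (ht3 : (w2 ≤ vc ∧ t3 = vc - w2) ∨ (vc < w2 ∧ t3 = vc + n - w2))
    (ht4 : (vc ≤ w2 ∧ t4 = w2 - vc) ∨ (w2 < vc ∧ t4 = w2 + n - vc)) :
    (w1 ≠ w2) ∧ min s1 s2 = min s3 s4 ∧ min t1 t2 = min t3 t4 := by
  have e1 : min s1 s2 = 1 := by clear * - hw1 hs1 hs2 hva hn; omega
  have e2 : min s3 s4 = 1 := by clear * - hw2 hs3 hs4 hva hn; omega
  have e3 : (e = 0 ∧ min t1 t2 = 1) ∨ (e = m ∧ min t1 t2 = m - 1) := by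
    clear * - hesp he hw1 ht1 ht2 hva hvc hn hm; omega
  have e4 : (e = 0 ∧ min t3 t4 = 1) ∨ (e = m ∧ min t3 t4 = m - 1) := by
    clear * - hesp he hw2 ht3 ht4 hva hvc hn hm; omega
  refine ⟨?_, ?_, ?_⟩
  · clear * - hw1 hw2 hva hn; omega
  · clear * - e1 e2; omega
  · clear * - e3 e4 hn hm; omega

lemma collideA {n k : ℕ} (hn : 4 ≤ n) {m : ℕ} (hm : n = m + m) (hk : 3 ≤ k)
    (a c : Fin n) (b d : Fin k) (he : (c - a).val = 0 ∨ (c - a).val = m) :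
    ∃ x y : Fin n × Fin k, x ≠ y ∧
      (cycleGraph n □ pathGraph k).dist x (a, b) = (cycleGraph n □ pathGraph k).dist y (a, b) ∧
      (cycleGraph n □ pathGraph k).dist x (c, d) = (cycleGraph n □ pathGraph k).dist y (c, d) := by
  have hn2 : 2 ≤ n := by omega
  have hk1 : 1 ≤ k := by omega
  obtain ⟨o1, ho1v⟩ : ∃ o1 : Fin n, o1.val = 1 := ⟨⟨1, by omega⟩, rfl⟩
  obtain ⟨p0, hp0v⟩ : ∃ p : Fin k, p.val = 0 := ⟨⟨0, by omega⟩, rfl⟩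
  have hw1 : (a.val + 1 < n ∧ (a + o1).val = a.val + 1) ∨
      (n ≤ a.val + 1 ∧ (a + o1).val = a.val + 1 - n) := by
    have h := finAddVal a o1
    rw [ho1v] at h
    exact h
  have hw2 : (1 ≤ a.val ∧ (a - o1).val = a.val - 1) ∨
      (a.val < 1 ∧ (a - o1).val = a.val + n - 1) := by
    have h := finSubVal a o1
    rw [ho1v] at h
    exact h
  have key := pureA n m hn hm a.val c.val (c - a).val (a + o1).val (a - o1).val
      (a - (a + o1)).val ((a + o1) - a).val (a - (a - o1)).val ((a - o1) - a).val
      (c - (a + o1)).val ((a + o1) - c).val (c - (a - o1)).val ((a - o1) - c).val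
      a.is_lt c.is_lt (finSubVal c a) he hw1 hw2
      (finSubVal a (a + o1)) (finSubVal (a + o1) a) (finSubVal a (a - o1)) (finSubVal (a - o1) a)
      (finSubVal c (a + o1)) (finSubVal (a + o1) c) (finSubVal c (a - o1)) (finSubVal (a - o1) c)
  refine ⟨(a + o1, p0), (a - o1, p0), pairNe1 (fun hcon => key.1 (congrArg Fin.val hcon)),
    distPairEq hn2 hk1 (by rw [key.2.1]), distPairEq hn2 hk1 (by rw [key.2.2])⟩

lemma pureB1 (n m k : ℕ) (hn : 4 ≤ n) (hm : n = m + m) (hk : 3 ≤ k)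
    (va vc vb vd e w vi vi1 s1 s2 s3 s4 t1 t2 t3 t4 : ℕ)
    (hva : va < n) (hvc : vc < n) (hvd : vd < k)
    (hesp : (va ≤ vc ∧ e = vc - va) ∨ (vc < va ∧ e = vc + n - va))
    (he0 : e ≠ 0) (hem : e ≠ m) (hle : e ≤ m)
    (hbd : vb < vd) (hw : w = vb + 1)
    (hiv : (va + m < n ∧ vi = va + m) ∨ (n ≤ va + m ∧ vi = va + m - n))
    (hi1 : (vi + 1 < n ∧ vi1 = vi + 1) ∨ (n ≤ vi + 1 ∧ vi1 = vi + 1 - n))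
    (hs1 : (vi ≤ va ∧ s1 = va - vi) ∨ (va < vi ∧ s1 = va + n - vi))
    (hs2 : (va ≤ vi ∧ s2 = vi - va) ∨ (vi < va ∧ s2 = vi + n - va))
    (hs3 : (vi1 ≤ va ∧ s3 = va - vi1) ∨ (va < vi1 ∧ s3 = va + n - vi1))
    (hs4 : (va ≤ vi1 ∧ s4 = vi1 - va) ∨ (vi1 < va ∧ s4 = vi1 + n - va))
    (ht1 : (vi ≤ vc ∧ t1 = vc - vi) ∨ (vc < vi ∧ t1 = vc + n - vi))
    (ht2 : (vc ≤ vi ∧ t2 = vi - vc) ∨ (vi < vc ∧ t2 = vi + n - vc))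
    (ht3 : (vi1 ≤ vc ∧ t3 = vc - vi1) ∨ (vc < vi1 ∧ t3 = vc + n - vi1))
    (ht4 : (vc ≤ vi1 ∧ t4 = vi1 - vc) ∨ (vi1 < vc ∧ t4 = vi1 + n - vc)) :
    vb ≠ w ∧
    min s1 s2 + (vb - vb + (vb - vb)) = min s3 s4 + (w - vb + (vb - w)) ∧
    min t1 t2 + (vb - vd + (vd - vb)) = min t3 t4 + (w - vd + (vd - w)) := by
  have f1 : min s1 s2 = m := by clear * - hiv hs1 hs2 hva hn hm; omega
  have f2 : min s3 s4 = m - 1 := by clear * - hiv hi1 hs3 hs4 hva hn hm; omega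
  have f3 : min t1 t2 = m - e := by
    clear * - hesp hle he0 hiv ht1 ht2 hva hvc hn hm; omega
  have f4 : min t3 t4 = m - e + 1 := by
    clear * - hesp hle he0 hem hiv hi1 ht3 ht4 hva hvc hn hm; omega
  refine ⟨by omega, ?_, ?_⟩
  · clear * - f1 f2 hw hm hn; omega
  · clear * - f3 f4 hw hbd hvd hle he0 hem hm hn; omega

lemma pureB2 (n m k : ℕ) (hn : 4 ≤ n) (hm : n = m + m) (hk : 3 ≤ k)
    (va vc vb vd e w vi1 s1 s3 s4 tcc t3 t4 : ℕ)
    (hva : va < n) (hvc : vc < n) (hvd : vd < k)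
    (hesp : (va ≤ vc ∧ e = vc - va) ∨ (vc < va ∧ e = vc + n - va))
    (hgt : m < e)
    (hbd : vb < vd) (hw : w = vb + 1)
    (hi1 : (vc + 1 < n ∧ vi1 = vc + 1) ∨ (n ≤ vc + 1 ∧ vi1 = vc + 1 - n))
    (hs1 : (vc ≤ va ∧ s1 = va - vc) ∨ (va < vc ∧ s1 = va + n - vc))
    (hs3 : (vi1 ≤ va ∧ s3 = va - vi1) ∨ (va < vi1 ∧ s3 = va + n - vi1))
    (hs4 : (va ≤ vi1 ∧ s4 = vi1 - va) ∨ (vi1 < va ∧ s4 = vi1 + n - va))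
    (htc : (vc ≤ vc ∧ tcc = vc - vc) ∨ (vc < vc ∧ tcc = vc + n - vc))
    (ht3 : (vi1 ≤ vc ∧ t3 = vc - vi1) ∨ (vc < vi1 ∧ t3 = vc + n - vi1))
    (ht4 : (vc ≤ vi1 ∧ t4 = vi1 - vc) ∨ (vi1 < vc ∧ t4 = vi1 + n - vc)) :
    vb ≠ w ∧
    min s1 e + (vb - vb + (vb - vb)) = min s3 s4 + (w - vb + (vb - w)) ∧
    min tcc tcc + (vb - vd + (vd - vb)) = min t3 t4 + (w - vd + (vd - w)) := by
  have f1 : min s1 e = n - e := by clear * - hesp hgt hs1 hva hvc hn hm; omega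
  have f2 : min s3 s4 = n - e - 1 := by clear * - hesp hgt hi1 hs3 hs4 hva hvc hn hm; omega
  have f3 : tcc = 0 := by clear * - htc; omega
  have f4 : min t3 t4 = 1 := by clear * - hi1 ht3 ht4 hvc hn; omega
  refine ⟨by omega, ?_, ?_⟩
  · clear * - f1 f2 hw hesp hgt hva hvc hm hn; omega
  · clear * - f3 f4 hw hbd hvd; omega

lemma collideB {n k : ℕ} (hn : 4 ≤ n) {m : ℕ} (hm : n = m + m) (hk : 3 ≤ k)
    (a c : Fin n) (b d : Fin k) (he0 : (c - a).val ≠ 0) (hem : (c - a).val ≠ m)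
    (hbd : b.val < d.val) :
    ∃ x y : Fin n × Fin k, x ≠ y ∧
      (cycleGraph n □ pathGraph k).dist x (a, b) = (cycleGraph n □ pathGraph k).dist y (a, b) ∧
      (cycleGraph n □ pathGraph k).dist x (c, d) = (cycleGraph n □ pathGraph k).dist y (c, d) := by
  have hn2 : 2 ≤ n := by omega
  have hk1 : 1 ≤ k := by omega
  obtain ⟨o1, ho1v⟩ : ∃ o1 : Fin n, o1.val = 1 := ⟨⟨1, by omega⟩, rfl⟩
  obtain ⟨b1, hb1v⟩ : ∃ b1 : Fin k, b1.val = b.val + 1 :=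
    ⟨⟨b.val + 1, by have := d.is_lt; omega⟩, rfl⟩
  rcases le_or_gt (c - a).val m with hle | hgt
  · obtain ⟨mm, hmmv⟩ : ∃ mm : Fin n, mm.val = m := ⟨⟨m, by omega⟩, rfl⟩
    have hiv : (a.val + m < n ∧ (a + mm).val = a.val + m) ∨
        (n ≤ a.val + m ∧ (a + mm).val = a.val + m - n) := by
      have h := finAddVal a mm
      rw [hmmv] at h
      exact h
    have hi1 : ((a + mm).val + 1 < n ∧ ((a + mm) + o1).val = (a + mm).val + 1) ∨
        (n ≤ (a + mm).val + 1 ∧ ((a + mm) + o1).val = (a + mm).val + 1 - n) := by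
      have h := finAddVal (a + mm) o1
      rw [ho1v] at h
      exact h
    have key := pureB1 n m k hn hm hk a.val c.val b.val d.val (c - a).val b1.val
        (a + mm).val ((a + mm) + o1).val
        (a - (a + mm)).val ((a + mm) - a).val (a - ((a + mm) + o1)).val (((a + mm) + o1) - a).val
        (c - (a + mm)).val ((a + mm) - c).val (c - ((a + mm) + o1)).val (((a + mm) + o1) - c).val
        a.is_lt c.is_lt d.is_lt (finSubVal c a) he0 hem hle hbd hb1v hiv hi1
        (finSubVal a (a + mm)) (finSubVal (a + mm) a)
        (finSubVal a ((a + mm) + o1)) (finSubVal ((a + mm) + o1) a)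
        (finSubVal c (a + mm)) (finSubVal (a + mm) c)
        (finSubVal c ((a + mm) + o1)) (finSubVal ((a + mm) + o1) c)
    exact ⟨(a + mm, b), ((a + mm) + o1, b1), pairNe2 (fun hcon => key.1 (congrArg Fin.val hcon)),
      distPairEq hn2 hk1 key.2.1, distPairEq hn2 hk1 key.2.2⟩
  · have hi1 : (c.val + 1 < n ∧ (c + o1).val = c.val + 1) ∨
        (n ≤ c.val + 1 ∧ (c + o1).val = c.val + 1 - n) := by
      have h := finAddVal c o1
      rw [ho1v] at h
      exact h
    have key := pureB2 n m k hn hm hk a.val c.val b.val d.val (c - a).val b1.val (c + o1).val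
        (a - c).val (a - (c + o1)).val ((c + o1) - a).val
        (c - c).val (c - (c + o1)).val ((c + o1) - c).val
        a.is_lt c.is_lt d.is_lt (finSubVal c a) hgt hbd hb1v hi1
        (finSubVal a c) (finSubVal a (c + o1)) (finSubVal (c + o1) a)
        (finSubVal c c) (finSubVal c (c + o1)) (finSubVal (c + o1) c)
    exact ⟨(c, b), (c + o1, b1), pairNe2 (fun hcon => key.1 (congrArg Fin.val hcon)),
      distPairEq hn2 hk1 key.2.1, distPairEq hn2 hk1 key.2.2⟩

lemma pureC1 (n m k : ℕ) (hn : 4 ≤ n) (hm : n = m + m) (hk : 3 ≤ k)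
    (va vc vb vd e vx2 vy2 vi1 s1 s3 s4 tcc t3 t4 : ℕ)
    (hva : va < n) (hvc : vc < n)
    (hesp : (va ≤ vc ∧ e = vc - va) ∨ (vc < va ∧ e = vc + n - va))
    (he0 : e ≠ 0) (hlt : e < m)
    (hx2 : vx2 - vb + (vb - vx2) = 1) (hy2 : vy2 - vb + (vb - vy2) = 0)
    (hdb : vd = vb)
    (hi1 : (vc + 1 < n ∧ vi1 = vc + 1) ∨ (n ≤ vc + 1 ∧ vi1 = vc + 1 - n))
    (hs1 : (vc ≤ va ∧ s1 = va - vc) ∨ (va < vc ∧ s1 = va + n - vc))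
    (hs3 : (vi1 ≤ va ∧ s3 = va - vi1) ∨ (va < vi1 ∧ s3 = va + n - vi1))
    (hs4 : (va ≤ vi1 ∧ s4 = vi1 - va) ∨ (vi1 < va ∧ s4 = vi1 + n - va))
    (htc : (vc ≤ vc ∧ tcc = vc - vc) ∨ (vc < vc ∧ tcc = vc + n - vc))
    (ht3 : (vi1 ≤ vc ∧ t3 = vc - vi1) ∨ (vc < vi1 ∧ t3 = vc + n - vi1))
    (ht4 : (vc ≤ vi1 ∧ t4 = vi1 - vc) ∨ (vi1 < vc ∧ t4 = vi1 + n - vc)) :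
    vx2 ≠ vy2 ∧
    min s1 e + (vx2 - vb + (vb - vx2)) = min s3 s4 + (vy2 - vb + (vb - vy2)) ∧
    min tcc tcc + (vx2 - vd + (vd - vx2)) = min t3 t4 + (vy2 - vd + (vd - vy2)) := by
  have f1 : min s1 e = e := by clear * - hesp he0 hlt hs1 hva hvc hn hm; omega
  have f2 : min s3 s4 = e + 1 := by clear * - hesp he0 hlt hi1 hs3 hs4 hva hvc hn hm; omega
  have f3 : tcc = 0 := by clear * - htc; omega
  have f4 : min t3 t4 = 1 := by clear * - hi1 ht3 ht4 hvc hn; omega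
  refine ⟨by omega, ?_, ?_⟩
  · clear * - f1 f2 hx2 hy2; omega
  · clear * - f3 f4 hx2 hy2 hdb; omega

lemma pureC2 (n m k : ℕ) (hn : 4 ≤ n) (hm : n = m + m) (hk : 3 ≤ k)
    (va vc vb vd e vx2 vy2 vi1 s1 s3 s4 tcc t3 t4 : ℕ)
    (hva : va < n) (hvc : vc < n)
    (hesp : (va ≤ vc ∧ e = vc - va) ∨ (vc < va ∧ e = vc + n - va))
    (hgt : m < e)
    (hx2 : vx2 - vb + (vb - vx2) = 1) (hy2 : vy2 - vb + (vb - vy2) = 0)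
    (hdb : vd = vb)
    (hi1 : (1 ≤ vc ∧ vi1 = vc - 1) ∨ (vc < 1 ∧ vi1 = vc + n - 1))
    (hs1 : (vc ≤ va ∧ s1 = va - vc) ∨ (va < vc ∧ s1 = va + n - vc))
    (hs3 : (vi1 ≤ va ∧ s3 = va - vi1) ∨ (va < vi1 ∧ s3 = va + n - vi1))
    (hs4 : (va ≤ vi1 ∧ s4 = vi1 - va) ∨ (vi1 < va ∧ s4 = vi1 + n - va))
    (htc : (vc ≤ vc ∧ tcc = vc - vc) ∨ (vc < vc ∧ tcc = vc + n - vc))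
    (ht3 : (vi1 ≤ vc ∧ t3 = vc - vi1) ∨ (vc < vi1 ∧ t3 = vc + n - vi1))
    (ht4 : (vc ≤ vi1 ∧ t4 = vi1 - vc) ∨ (vi1 < vc ∧ t4 = vi1 + n - vc)) :
    vx2 ≠ vy2 ∧
    min s1 e + (vx2 - vb + (vb - vx2)) = min s3 s4 + (vy2 - vb + (vb - vy2)) ∧
    min tcc tcc + (vx2 - vd + (vd - vx2)) = min t3 t4 + (vy2 - vd + (vd - vy2)) := by
  have f1 : min s1 e = n - e := by clear * - hesp hgt hs1 hva hvc hn hm; omega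
  have f2 : min s3 s4 = n - e + 1 := by clear * - hesp hgt hi1 hs3 hs4 hva hvc hn hm; omega
  have f3 : tcc = 0 := by clear * - htc; omega
  have f4 : min t3 t4 = 1 := by clear * - hi1 ht3 ht4 hvc hn; omega
  refine ⟨by omega, ?_, ?_⟩
  · clear * - f1 f2 hx2 hy2 hesp hgt hva hvc hm hn; omega
  · clear * - f3 f4 hx2 hy2 hdb; omega

lemma collideCside {n k : ℕ} (hn : 4 ≤ n) {m : ℕ} (hm : n = m + m) (hk : 3 ≤ k)
    (a c : Fin n) (b d : Fin k) (he0 : (c - a).val ≠ 0) (hem : (c - a).val ≠ m)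
    (hdb : d.val = b.val) (x2 y2 : Fin k)
    (hx2 : x2.val - b.val + (b.val - x2.val) = 1)
    (hy2 : y2.val - b.val + (b.val - y2.val) = 0) :
    ∃ x y : Fin n × Fin k, x ≠ y ∧
      (cycleGraph n □ pathGraph k).dist x (a, b) = (cycleGraph n □ pathGraph k).dist y (a, b) ∧
      (cycleGraph n □ pathGraph k).dist x (c, d) = (cycleGraph n □ pathGraph k).dist y (c, d) := by
  have hn2 : 2 ≤ n := by omega
  have hk1 : 1 ≤ k := by omega
  obtain ⟨o1, ho1v⟩ : ∃ o1 : Fin n, o1.val = 1 := ⟨⟨1, by omega⟩, rfl⟩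
  rcases lt_or_ge (c - a).val m with hlt | hge
  · have hi1 : (c.val + 1 < n ∧ (c + o1).val = c.val + 1) ∨
        (n ≤ c.val + 1 ∧ (c + o1).val = c.val + 1 - n) := by
      have h := finAddVal c o1
      rw [ho1v] at h
      exact h
    have key := pureC1 n m k hn hm hk a.val c.val b.val d.val (c - a).val x2.val y2.val
        (c + o1).val (a - c).val (a - (c + o1)).val ((c + o1) - a).val
        (c - c).val (c - (c + o1)).val ((c + o1) - c).val
        a.is_lt c.is_lt (finSubVal c a) he0 hlt hx2 hy2 hdb hi1
        (finSubVal a c) (finSubVal a (c + o1)) (finSubVal (c + o1) a)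
        (finSubVal c c) (finSubVal c (c + o1)) (finSubVal (c + o1) c)
    exact ⟨(c, x2), (c + o1, y2), pairNe2 (fun hcon => key.1 (congrArg Fin.val hcon)),
      distPairEq hn2 hk1 key.2.1, distPairEq hn2 hk1 key.2.2⟩
  · have hgt : m < (c - a).val := by omega
    have hi1 : (1 ≤ c.val ∧ (c - o1).val = c.val - 1) ∨
        (c.val < 1 ∧ (c - o1).val = c.val + n - 1) := by
      have h := finSubVal c o1
      rw [ho1v] at h
      exact h
    have key := pureC2 n m k hn hm hk a.val c.val b.val d.val (c - a).val x2.val y2.val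
        (c - o1).val (a - c).val (a - (c - o1)).val ((c - o1) - a).val
        (c - c).val (c - (c - o1)).val ((c - o1) - c).val
        a.is_lt c.is_lt (finSubVal c a) hgt hx2 hy2 hdb hi1
        (finSubVal a c) (finSubVal a (c - o1)) (finSubVal (c - o1) a)
        (finSubVal c c) (finSubVal c (c - o1)) (finSubVal (c - o1) c)
    exact ⟨(c, x2), (c - o1, y2), pairNe2 (fun hcon => key.1 (congrArg Fin.val hcon)),
      distPairEq hn2 hk1 key.2.1, distPairEq hn2 hk1 key.2.2⟩

lemma collideC {n k : ℕ} (hn : 4 ≤ n) {m : ℕ} (hm : n = m + m) (hk : 3 ≤ k)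
    (a c : Fin n) (b d : Fin k) (he0 : (c - a).val ≠ 0) (hem : (c - a).val ≠ m)
    (hdb : d.val = b.val) :
    ∃ x y : Fin n × Fin k, x ≠ y ∧
      (cycleGraph n □ pathGraph k).dist x (a, b) = (cycleGraph n □ pathGraph k).dist y (a, b) ∧
      (cycleGraph n □ pathGraph k).dist x (c, d) = (cycleGraph n □ pathGraph k).dist y (c, d) := by
  have hn2 : 2 ≤ n := by omega
  have hk1 : 1 ≤ k := by omega
  have hbk := b.is_lt
  rcases Nat.eq_zero_or_pos b.val with hb0 | hbpos
  · refine collideCside hn hm hk a c b d he0 hem hdb ⟨1, by omega⟩ ⟨0, by omega⟩ ?_ ?_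
    · simp only [hb0]
    · simp only [hb0]
  rcases eq_or_ne b.val (k - 1) with hbtop | hbmid
  · refine collideCside hn hm hk a c b d he0 hem hdb ⟨k - 2, by omega⟩ ⟨k - 1, by omega⟩ ?_ ?_
    · simp only [hbtop]; omega
    · simp only [hbtop]; omega
  · -- middle: 1 ≤ b.val ≤ k - 2
    obtain ⟨bp, hbpv⟩ : ∃ bp : Fin k, bp.val = b.val + 1 := ⟨⟨b.val + 1, by omega⟩, rfl⟩
    obtain ⟨bm, hbmv⟩ : ∃ bm : Fin k, bm.val = b.val - 1 := ⟨⟨b.val - 1, by omega⟩, rfl⟩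
    refine ⟨(a, bp), (a, bm), pairNe2 (fun hcon => ?_), distPairEq hn2 hk1 ?_,
      distPairEq hn2 hk1 ?_⟩
    · have := congrArg Fin.val hcon
      clear * - this hbpv hbmv hbpos hbmid hbk
      omega
    · clear * - hbpv hbmv hbpos hbmid hbk
      omega
    · clear * - hbpv hbmv hbpos hbmid hbk hdb
      omega

lemma collide {n k : ℕ} (hn : 4 ≤ n) {m : ℕ} (hm : n = m + m) (hk : 3 ≤ k)
    (q1 q2 : Fin n × Fin k) :
    ∃ x y : Fin n × Fin k, x ≠ y ∧
      (cycleGraph n □ pathGraph k).dist x q1 = (cycleGraph n □ pathGraph k).dist y q1 ∧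
      (cycleGraph n □ pathGraph k).dist x q2 = (cycleGraph n □ pathGraph k).dist y q2 := by
  obtain ⟨a, b⟩ := q1
  obtain ⟨c, d⟩ := q2
  rcases eq_or_ne (c - a).val 0 with h0 | h0
  · exact collideA hn hm hk a c b d (Or.inl h0)
  rcases eq_or_ne (c - a).val m with hmv | hmv
  · exact collideA hn hm hk a c b d (Or.inr hmv)
  rcases lt_trichotomy b.val d.val with hbd | hbd | hbd
  · exact collideB hn hm hk a c b d h0 hmv hbd
  · exact collideC hn hm hk a c b d h0 hmv hbd.symm
  · have hs1 := finSubVal c a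
    have hs2 := finSubVal a c
    have hva := a.is_lt
    have hvc := c.is_lt
    have h0' : (a - c).val ≠ 0 := by clear * - hs1 hs2 h0 hva hvc; omega
    have hm' : (a - c).val ≠ m := by clear * - hs1 hs2 h0 hmv hva hvc hm hn; omega
    obtain ⟨x, y, hxy, e2, e1⟩ := collideB hn hm hk c a d b h0' hm' hbd
    exact ⟨x, y, hxy, e1, e2⟩

lemma pureR (n m k : ℕ) (hn : 4 ≤ n) (hm : n = m + m) (hk : 3 ≤ k)
    (vi vj vi2 vj2 u1 u2 u1' u2' v1 v2 v1' v2' : ℕ)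
    (hvi : vi < n) (hvj : vj < k) (hvi2 : vi2 < n) (hvj2 : vj2 < k)
    (hu1 : (vi ≤ 0 ∧ u1 = 0 - vi) ∨ (0 < vi ∧ u1 = 0 + n - vi))
    (hu2 : (0 ≤ vi ∧ u2 = vi - 0) ∨ (vi < 0 ∧ u2 = vi + n - 0))
    (hu1' : (vi2 ≤ 0 ∧ u1' = 0 - vi2) ∨ (0 < vi2 ∧ u1' = 0 + n - vi2))
    (hu2' : (0 ≤ vi2 ∧ u2' = vi2 - 0) ∨ (vi2 < 0 ∧ u2' = vi2 + n - 0))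
    (hv1 : (vi ≤ 1 ∧ v1 = 1 - vi) ∨ (1 < vi ∧ v1 = 1 + n - vi))
    (hv2 : (1 ≤ vi ∧ v2 = vi - 1) ∨ (vi < 1 ∧ v2 = vi + n - 1))
    (hv1' : (vi2 ≤ 1 ∧ v1' = 1 - vi2) ∨ (1 < vi2 ∧ v1' = 1 + n - vi2))
    (hv2' : (1 ≤ vi2 ∧ v2' = vi2 - 1) ∨ (vi2 < 1 ∧ v2' = vi2 + n - 1))
    (E1 : min u1 u2 + (vj - 0 + (0 - vj)) = min u1' u2' + (vj2 - 0 + (0 - vj2)))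
    (E2 : min v1 v2 + (vj - 0 + (0 - vj)) = min v1' v2' + (vj2 - 0 + (0 - vj2)))
    (E3 : min u1 u2 + (vj - (k - 1) + ((k - 1) - vj)) =
      min u1' u2' + (vj2 - (k - 1) + ((k - 1) - vj2))) :
    vi = vi2 ∧ vj = vj2 := by
  have h5 : min u1 u2 = min u1' u2' ∧ vj = vj2 := by
    clear * - E1 E3 hvj hvj2 hk; omega
  have h6 : min v1 v2 = min v1' v2' := by clear * - E2 h5; omega
  have hu : min u1 u2 = min vi (n - vi) := by clear * - hu1 hu2 hvi hn; omega
  have hu' : min u1' u2' = min vi2 (n - vi2) := by clear * - hu1' hu2' hvi2 hn; omega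
  have hv : (vi = 0 ∧ min v1 v2 = 1) ∨ (1 ≤ vi ∧ min v1 v2 = min (vi - 1) (n + 1 - vi)) := by
    clear * - hv1 hv2 hvi hn; omega
  have hv' : (vi2 = 0 ∧ min v1' v2' = 1) ∨
      (1 ≤ vi2 ∧ min v1' v2' = min (vi2 - 1) (n + 1 - vi2)) := by
    clear * - hv1' hv2' hvi2 hn; omega
  refine ⟨?_, h5.2⟩
  clear * - h5 h6 hu hu' hv hv' hvi hvi2 hn hm
  omega

lemma resolveQ {n k : ℕ} (hn : 4 ≤ n) {m : ℕ} (hm : n = m + m) (hk : 3 ≤ k)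
    (z0 z1 : Fin n) (p0 pt : Fin k) (hz0 : z0.val = 0) (hz1 : z1.val = 1)
    (hp0 : p0.val = 0) (hpt : pt.val = k - 1) :
    ∀ x y : Fin n × Fin k,
      (∀ q ∈ ({(z0, p0), (z1, p0), (z0, pt)} : Finset (Fin n × Fin k)),
        (cycleGraph n □ pathGraph k).dist x q = (cycleGraph n □ pathGraph k).dist y q) →
      x = y := by
  have hn2 : 2 ≤ n := by omega
  have hk1 : 1 ≤ k := by omega
  rintro ⟨i, j⟩ ⟨i2, j2⟩ h
  have E1 := h (z0, p0) (Finset.mem_insert_self _ _)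
  have E2 := h (z1, p0) (Finset.mem_insert_of_mem (Finset.mem_insert_self _ _))
  have E3 := h (z0, pt)
    (Finset.mem_insert_of_mem (Finset.mem_insert_of_mem (Finset.mem_singleton_self _)))
  rw [prodDist hn2 hk1, prodDist hn2 hk1] at E1 E2 E3
  rw [hp0] at E1 E2
  rw [hpt] at E3
  have hu1 := finSubVal z0 i
  have hu2 := finSubVal i z0
  have hu1' := finSubVal z0 i2
  have hu2' := finSubVal i2 z0
  have hv1 := finSubVal z1 i
  have hv2 := finSubVal i z1
  have hv1' := finSubVal z1 i2
  have hv2' := finSubVal i2 z1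
  rw [hz0] at hu1 hu2 hu1' hu2'
  rw [hz1] at hv1 hv2 hv1' hv2'
  have key := pureR n m k hn hm hk i.val j.val i2.val j2.val
    (z0 - i).val (i - z0).val (z0 - i2).val (i2 - z0).val
    (z1 - i).val (i - z1).val (z1 - i2).val (i2 - z1).val
    i.is_lt j.is_lt i2.is_lt j2.is_lt
    hu1 hu2 hu1' hu2' hv1 hv2 hv1' hv2' E1 E2 E3
  simp only [Prod.mk.injEq, Fin.ext_iff]
  exact key

theorem stmt6 (n k : ℕ) (hn : 4 ≤ n) (he : Even n) (hk : 3 ≤ k) :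
    IsLeast {m : ℕ | ∃ Q, IsResolving (cycleGraph n □ pathGraph k) Q ∧ Q.card = m} (3) := by
  obtain ⟨m, hm⟩ := he
  constructor
  · -- membership: an explicit resolving set of size 3
    obtain ⟨z0, hz0⟩ : ∃ z : Fin n, z.val = 0 := ⟨⟨0, by omega⟩, rfl⟩
    obtain ⟨z1, hz1⟩ : ∃ z : Fin n, z.val = 1 := ⟨⟨1, by omega⟩, rfl⟩
    obtain ⟨p0, hp0⟩ : ∃ p : Fin k, p.val = 0 := ⟨⟨0, by omega⟩, rfl⟩
    obtain ⟨pt, hpt⟩ : ∃ p : Fin k, p.val = k - 1 := ⟨⟨k - 1, by omega⟩, rfl⟩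
    refine ⟨{(z0, p0), (z1, p0), (z0, pt)},
      resolveQ hn hm hk z0 z1 p0 pt hz0 hz1 hp0 hpt, ?_⟩
    rw [Finset.card_insert_of_notMem, Finset.card_insert_of_notMem, Finset.card_singleton]
    · intro hmem
      simp only [Finset.mem_singleton, Prod.mk.injEq, Fin.ext_iff] at hmem
      omega
    · intro hmem
      simp only [Finset.mem_insert, Finset.mem_singleton, Prod.mk.injEq, Fin.ext_iff] at hmem
      omega
  · -- lower bound: no resolving set of size ≤ 2
    rintro mq ⟨Q, hQ, rfl⟩
    by_contra hlt
    push_neg at hlt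
    obtain ⟨q1, q2, hsub⟩ : ∃ q1 q2 : Fin n × Fin k, Q ⊆ {q1, q2} := by
      rcases Finset.eq_empty_or_nonempty Q with rfl | ⟨q, hq⟩
      · exact ⟨(⟨0, by omega⟩, ⟨0, by omega⟩), (⟨0, by omega⟩, ⟨0, by omega⟩), by simp⟩
      · have h1 : (Q.erase q).card ≤ 1 := by
          have := Finset.card_erase_of_mem hq
          omega
        haveI : Nonempty (Fin n × Fin k) := ⟨(⟨0, by omega⟩, ⟨0, by omega⟩)⟩
        obtain ⟨x, hx⟩ := Finset.card_le_one_iff_subset_singleton.mp h1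
        refine ⟨q, x, fun z hz => ?_⟩
        rcases eq_or_ne z q with rfl | hzq
        · exact Finset.mem_insert_self _ _
        · have hzx := hx (Finset.mem_erase.mpr ⟨hzq, hz⟩)
          rw [Finset.mem_singleton] at hzx
          exact Finset.mem_insert_of_mem (Finset.mem_singleton.mpr hzx)
    obtain ⟨x, y, hxy, e1, e2⟩ := collide hn hm hk q1 q2
    apply hxy
    apply hQ
    intro q hq
    rcases Finset.mem_insert.mp (hsub hq) with rfl | hq2
    · exact e1
    · rw [Finset.mem_singleton] at hq2
      subst hq2
      exact e2
end

section
/- If n ≥ 3 and k ≥ 3, then the strong metric dimension of the Cartesian product C_n □ P_k is n. -/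
open SimpleGraph
open Fin.CommRing

section BoxProd
variable {α β : Type*} {G : SimpleGraph α} {H : SimpleGraph β}

lemma bp_walk_le (hG : G.Connected) (hH : H.Connected) :
    ∀ {x y : α × β} (w : (G □ H).Walk x y),
      G.dist x.1 y.1 + H.dist x.2 y.2 ≤ w.length
  | _, _, Walk.nil => by simp
  | x, y, @Walk.cons _ _ _ z _ h w => by
    have ih := bp_walk_le hG hH w
    rw [Walk.length_cons]
    rcases boxProd_adj.mp h with ⟨ha, he⟩ | ⟨ha, he⟩
    · have h1 : G.dist x.1 z.1 = 1 := dist_eq_one_iff_adj.mpr ha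
      have h2 := hG.dist_triangle (u := x.1) (v := z.1) (w := y.1)
      have h3 := hH.dist_triangle (u := x.2) (v := z.2) (w := y.2)
      have h4 : H.dist x.2 z.2 = 0 := by rw [he]; exact dist_self
      omega
    · have h1 : H.dist x.2 z.2 = 1 := dist_eq_one_iff_adj.mpr ha
      have h2 := hG.dist_triangle (u := x.1) (v := z.1) (w := y.1)
      have h3 := hH.dist_triangle (u := x.2) (v := z.2) (w := y.2)
      have h4 : G.dist x.1 z.1 = 0 := by rw [he]; exact dist_self
      omega

lemma bp_dist (hG : G.Connected) (hH : H.Connected) (x y : α × β) :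
    (G □ H).dist x y = G.dist x.1 y.1 + H.dist x.2 y.2 := by
  refine le_antisymm ?_ ?_
  · obtain ⟨w1, hw1⟩ := hG.exists_walk_length_eq_dist x.1 y.1
    obtain ⟨w2, hw2⟩ := hH.exists_walk_length_eq_dist x.2 y.2
    have := dist_le ((w1.boxProdLeft H x.2).append (w2.boxProdRight G y.1))
    have e1 : (w1.boxProdLeft H x.2).length = w1.length := Walk.length_map _ _
    have e2 : (w2.boxProdRight G y.1).length = w2.length := Walk.length_map _ _
    rw [Walk.length_append, e1, e2, hw1, hw2] at this
    exact this
  · obtain ⟨w, hw⟩ := (hG.boxProd hH).exists_walk_length_eq_dist x y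
    rw [← hw]
    exact bp_walk_le hG hH w

end BoxProd


lemma path_walk_le {k : ℕ} : ∀ {s t : Fin k} (w : (pathGraph k).Walk s t),
    (t.val - s.val) + (s.val - t.val) ≤ w.length
  | _, _, Walk.nil => by simp
  | s, t, @Walk.cons _ _ _ z _ h w => by
    have ih := path_walk_le w
    rw [Walk.length_cons]
    rcases pathGraph_adj.mp h with h1 | h1 <;> omega

lemma path_dist_le {k : ℕ} (hk : 1 ≤ k) :
    ∀ (d : ℕ) (s t : Fin k), t.val = s.val + d → (pathGraph k).dist s t ≤ d := by
  obtain ⟨k, rfl⟩ : ∃ m, k = m + 1 := ⟨k - 1, by omega⟩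
  intro d
  induction d with
  | zero => intro s t h; have : s = t := Fin.ext (by omega); simp [this]
  | succ d ih =>
    intro s t h
    have hs : s.val + 1 < k + 1 := by omega
    set s' : Fin (k+1) := ⟨s.val + 1, hs⟩ with hs'
    have hadj : (pathGraph (k+1)).Adj s s' := pathGraph_adj.mpr (Or.inl rfl)
    have h1 := (pathGraph_connected k).dist_triangle (u := s) (v := s') (w := t)
    have h2 : (pathGraph (k+1)).dist s s' = 1 := dist_eq_one_iff_adj.mpr hadj
    have h3 := ih s' t (by simp [hs']; omega)
    omega

lemma path_dist {k : ℕ} (hk : 1 ≤ k) (s t : Fin k) :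
    (pathGraph k).dist s t = (t.val - s.val) + (s.val - t.val) := by
  refine le_antisymm ?_ ?_
  · rcases le_total s.val t.val with h | h
    · have := path_dist_le hk (t.val - s.val) s t (by omega); omega
    · have := path_dist_le hk (s.val - t.val) t s (by omega)
      rw [dist_comm]; omega
  · obtain ⟨k, rfl⟩ : ∃ m, k = m + 1 := ⟨k - 1, by omega⟩
    obtain ⟨w, hw⟩ := (pathGraph_connected k).exists_walk_length_eq_dist s t
    rw [← hw]
    exact path_walk_le w


lemma cyc_sub_val_int {n : ℕ} (hn : 3 ≤ n) (u v : Fin n) :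
    ∃ c : ℤ, (v.val : ℤ) - u.val = c * n + ((v - u).val : ℤ) := by
  have hs : (v - u).val = (n - u.val + v.val) % n := by rw [Fin.sub_def]
  have hq := Nat.div_add_mod (n - u.val + v.val) n
  rw [← hs] at hq
  have hu : u.val ≤ n := u.is_lt.le
  set q : ℕ := (n - u.val + v.val) / n with hqdef
  refine ⟨(q : ℤ) - 1, ?_⟩
  zify [hu] at hq
  linarith

lemma cyc_adj_step {n : ℕ} (hn : 3 ≤ n) {u v : Fin n} (h : (cycleGraph n).Adj u v) :
    ∃ c : ℤ, (v.val : ℤ) - u.val = c * n + 1 ∨ (v.val : ℤ) - u.val = c * n - 1 := by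
  rcases cycleGraph_adj'.mp h with h1 | h1
  · obtain ⟨c, hc⟩ := cyc_sub_val_int hn v u
    rw [h1] at hc
    exact ⟨-c, Or.inr (by push_cast at hc ⊢; linarith)⟩
  · obtain ⟨c, hc⟩ := cyc_sub_val_int hn u v
    rw [h1] at hc
    exact ⟨c, Or.inl (by push_cast at hc ⊢; linarith)⟩

lemma cyc_walk_sum {n : ℕ} (hn : 3 ≤ n) :
    ∀ {u v : Fin n} (w : (cycleGraph n).Walk u v),
      ∃ s c : ℤ, s.natAbs ≤ w.length ∧ (v.val : ℤ) - u.val = c * n + s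
  | _, _, Walk.nil => ⟨0, 0, by simp⟩
  | u, v, @Walk.cons _ _ _ z _ h w => by
    obtain ⟨s, c, hs, hc⟩ := cyc_walk_sum hn w
    obtain ⟨c', hc'⟩ := cyc_adj_step hn h
    rw [Walk.length_cons]
    rcases hc' with h1 | h1
    · exact ⟨s + 1, c + c', by omega, by push_cast; linarith⟩
    · exact ⟨s - 1, c + c', by omega, by push_cast; linarith⟩

lemma cyc_connected {n : ℕ} (hn : 3 ≤ n) : (cycleGraph n).Connected := by
  obtain ⟨m, rfl⟩ : ∃ m, n = m + 1 := ⟨n - 1, by omega⟩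
  exact cycleGraph_connected

lemma cyc_dist_ge {n : ℕ} (hn : 3 ≤ n) (u v : Fin n) :
    min (v - u).val (n - (v - u).val) ≤ (cycleGraph n).dist u v := by
  obtain ⟨w, hw⟩ := (cyc_connected hn).exists_walk_length_eq_dist u v
  obtain ⟨s, c, hs, hc⟩ := cyc_walk_sum hn w
  obtain ⟨c', hc'⟩ := cyc_sub_val_int hn u v
  have hm : (v - u).val < n := (v - u).is_lt
  have key : ∃ t : ℤ, s = t + ((v - u).val : ℤ) ∧ (0 ≤ t ∨ t ≤ -(n : ℤ)) := by
    refine ⟨(c' - c) * n, by linarith, ?_⟩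
    rcases le_or_gt 0 (c' - c) with hd | hd
    · exact Or.inl (mul_nonneg hd (by positivity))
    · right
      have : (c' - c) * (n : ℤ) ≤ -1 * n :=
        mul_le_mul_of_nonneg_right (by omega) (by positivity)
      linarith
  obtain ⟨t, ht1, ht2⟩ := key
  rw [← hw]
  omega

lemma cyc_sub_one_val {m : ℕ} (x : Fin (m + 3)) (hx : 1 ≤ x.val) :
    (x - 1).val = x.val - 1 := by
  rw [Fin.sub_def]
  show ((m + 3) - (1 : Fin (m+3)).val + x.val) % (m + 3) = x.val - 1
  rw [show (1 : Fin (m+3)).val = 1 from rfl]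
  have hlt := x.is_lt
  have h1 : (m + 3) - 1 + x.val = (m + 3) + (x.val - 1) := by omega
  rw [h1, Nat.add_mod_left, Nat.mod_eq_of_lt (by omega)]

lemma cyc_dist_le_dir {n : ℕ} (hn : 3 ≤ n) :
    ∀ (d : ℕ) (u v : Fin n), (v - u).val = d → (cycleGraph n).dist u v ≤ d := by
  obtain ⟨m, rfl⟩ : ∃ m, n = m + 3 := ⟨n - 3, by omega⟩
  intro d
  induction d with
  | zero =>
    intro u v h
    have h0 : v - u = 0 := Fin.ext h
    have h1 : v = u := sub_eq_zero.mp h0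
    subst h1
    exact le_of_eq (SimpleGraph.dist_self)
  | succ d ih =>
    intro u v h
    set u' : Fin (m + 3) := u + 1 with hu'
    have hadj : (cycleGraph (m + 3)).Adj u u' := by
      rw [cycleGraph_adj']
      right
      have h2 : u' - u = 1 := by rw [hu']; ring
      rw [h2]
      exact Fin.val_one (m + 1)
    have hval : (v - u').val = d := by
      have h2 : v - u' = (v - u) - 1 := by rw [hu']; ring
      rw [h2, cyc_sub_one_val (v - u) (by omega), h]
      omega
    have h1 := (cyc_connected (by omega : 3 ≤ m + 3)).dist_triangle (u := u) (v := u') (w := v)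
    have h2 : (cycleGraph (m+3)).dist u u' = 1 := dist_eq_one_iff_adj.mpr hadj
    have h3 := ih u' v hval
    omega

lemma cyc_neg_val {n : ℕ} (hn : 3 ≤ n) {u v : Fin n} (h : u ≠ v) :
    (u - v).val = n - (v - u).val := by
  obtain ⟨c, hc⟩ := cyc_sub_val_int hn v u
  obtain ⟨c', hc'⟩ := cyc_sub_val_int hn u v
  haveI : NeZero n := ⟨by omega⟩
  have ha : (u - v).val ≠ 0 := by
    intro h0
    exact h (sub_eq_zero.mp (Fin.ext h0 : u - v = 0))
  have hb : (v - u).val ≠ 0 := by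
    intro h0
    exact h (sub_eq_zero.mp (Fin.ext h0 : v - u = 0)).symm
  have ha' : (u - v).val < n := (u - v).is_lt
  have hb' : (v - u).val < n := (v - u).is_lt
  have hsum : (0 : ℤ) = (c + c') * n + ((u - v).val + (v - u).val) := by
    push_cast; linarith
  have he : (c + c') * (n : ℤ) = -(((u - v).val : ℤ) + (v - u).val) := by linarith
  have hcc : c + c' = -1 := by
    rcases lt_trichotomy (c + c') (-1) with h1 | h1 | h1
    · exfalso
      have : (c + c') * (n : ℤ) ≤ -2 * n :=
        mul_le_mul_of_nonneg_right (by omega) (by positivity)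
      have hn' : (3 : ℤ) ≤ n := by exact_mod_cast hn
      omega
    · exact h1
    · exfalso
      have : 0 ≤ (c + c') * (n : ℤ) := mul_nonneg (by omega) (by positivity)
      omega
  rw [hcc] at he
  have : ((u - v).val : ℤ) + (v - u).val = n := by linarith
  omega

lemma cyc_dist {n : ℕ} (hn : 3 ≤ n) (u v : Fin n) :
    (cycleGraph n).dist u v = min (v - u).val (n - (v - u).val) := by
  refine le_antisymm (le_min ?_ ?_) (cyc_dist_ge hn u v)
  · exact cyc_dist_le_dir hn _ u v rfl
  · by_cases h : u = v
    · subst h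
      rw [SimpleGraph.dist_self]
      exact Nat.zero_le _
    · rw [SimpleGraph.dist_comm]
      have h2 := cyc_dist_le_dir hn ((u - v).val) v u rfl
      rwa [cyc_neg_val hn h] at h2

lemma cyc_dist_cast {n : ℕ} [NeZero n] (hn : 3 ≤ n) (x : Fin n) (d : ℕ) (hd : d ≤ n / 2) :
    (cycleGraph n).dist x (x + (d : Fin n)) = d := by
  have hdn : d < n := by omega
  have h1 : ((x + (d : Fin n)) - x) = (d : Fin n) := by
    obtain ⟨m, rfl⟩ : ∃ m, n = m + 3 := ⟨n - 3, by omega⟩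
    ring
  rw [cyc_dist hn, h1, Fin.val_cast_of_lt hdn]
  omega

lemma cyc_dist_cast_neg {n : ℕ} [NeZero n] (hn : 3 ≤ n) (x : Fin n) (d : ℕ) (hd : d ≤ n / 2) :
    (cycleGraph n).dist x (x - (d : Fin n)) = d := by
  have h1 := cyc_dist_cast hn (x - (d : Fin n)) d hd
  rw [sub_add_cancel] at h1
  rw [SimpleGraph.dist_comm]
  exact h1

lemma cyc_extend {n : ℕ} [NeZero n] (hn : 3 ≤ n) (a b : Fin n) :
    ∃ c : Fin n, (cycleGraph n).dist b c =
      (cycleGraph n).dist b a + (cycleGraph n).dist a c := by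
  have hm : (a - b).val < n := (a - b).is_lt
  have hab : a = b + (((a - b).val : ℕ) : Fin n) := by
    rw [Fin.cast_val_eq_self]
    obtain ⟨m, rfl⟩ : ∃ m, n = m + 3 := ⟨n - 3, by omega⟩
    ring
  rcases le_or_gt (a - b).val (n / 2) with hc | hc
  · refine ⟨b + ((n / 2 : ℕ) : Fin n), ?_⟩
    have e1 : (cycleGraph n).dist b (b + ((n / 2 : ℕ) : Fin n)) = n / 2 :=
      cyc_dist_cast hn b (n / 2) le_rfl
    have e2 : (cycleGraph n).dist b a = (a - b).val := by
      conv_lhs => rw [hab]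
      exact cyc_dist_cast hn b _ hc
    have e3 : b + ((n / 2 : ℕ) : Fin n) = a + (((n / 2 - (a - b).val : ℕ)) : Fin n) := by
      conv_lhs => rw [show (n / 2 : ℕ) = (a - b).val + (n / 2 - (a - b).val) by omega]
      rw [Nat.cast_add, ← add_assoc, ← hab]
    have e4 : (cycleGraph n).dist a (a + (((n / 2 - (a - b).val : ℕ)) : Fin n))
        = n / 2 - (a - b).val := cyc_dist_cast hn a _ (by omega)
    rw [e1, e2, e3, e4]
    omega
  · have hane : a ≠ b := by
      intro he
      rw [he, sub_self] at hc
      simp at hc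
    have hm' : (b - a).val = n - (a - b).val := cyc_neg_val hn (Ne.symm hane)
    refine ⟨b - ((n / 2 : ℕ) : Fin n), ?_⟩
    have e1 : (cycleGraph n).dist b (b - ((n / 2 : ℕ) : Fin n)) = n / 2 :=
      cyc_dist_cast_neg hn b (n / 2) le_rfl
    have e2 : (cycleGraph n).dist b a = n - (a - b).val := by
      rw [cyc_dist hn b a]
      omega
    have hba : b = a + (((n - (a - b).val : ℕ)) : Fin n) := by
      rw [← hm', Fin.cast_val_eq_self]
      obtain ⟨m, rfl⟩ : ∃ m, n = m + 3 := ⟨n - 3, by omega⟩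
      ring
    have e3 : b - ((n / 2 : ℕ) : Fin n)
        = a - (((n / 2 - (n - (a - b).val) : ℕ)) : Fin n) := by
      conv_lhs => rw [hba, show (n / 2 : ℕ) = (n - (a - b).val) + (n / 2 - (n - (a - b).val)) by omega, Nat.cast_add]
      obtain ⟨m, rfl⟩ : ∃ m, n = m + 3 := ⟨n - 3, by omega⟩
      ring
    have e4 : (cycleGraph n).dist a (a - (((n / 2 - (n - (a - b).val) : ℕ)) : Fin n))
        = n / 2 - (n - (a - b).val) := cyc_dist_cast_neg hn a _ (by omega)
    rw [e1, e2, e3, e4]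
    omega

theorem stmt7 (n k : ℕ) (hn : 3 ≤ n) (hk : 3 ≤ k) :
    IsLeast {m : ℕ | ∃ Q, IsStrongResolving (cycleGraph n □ pathGraph k) Q ∧ Q.card = m} (n) := by
  haveI : NeZero n := ⟨by omega⟩
  haveI : NeZero k := ⟨by omega⟩
  have hk1 : 1 ≤ k := by omega
  have hcyc : (cycleGraph n).Connected := cyc_connected hn
  have hpath : (pathGraph k).Connected := by
    obtain ⟨k', rfl⟩ : ∃ m, k = m + 1 := ⟨k - 1, by omega⟩
    exact pathGraph_connected _
  have hconn : (cycleGraph n □ pathGraph k).Connected := hcyc.boxProd hpath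
  constructor
  · -- membership: the bottom cycle layer is a strong resolving set of size n
    refine ⟨Finset.univ.image (fun i : Fin n => (i, (0 : Fin k))), ?_, ?_⟩
    · intro p q hne
      obtain ⟨a, s⟩ := p
      obtain ⟨b, t⟩ := q
      rcases le_total s.val t.val with hst | hst
      · obtain ⟨c, hc⟩ := cyc_extend hn a b
        refine ⟨(c, 0), Finset.mem_image_of_mem _ (Finset.mem_univ c), Or.inl ?_⟩
        rw [bp_dist hcyc hpath, bp_dist hcyc hpath, bp_dist hcyc hpath]
        rw [path_dist hk1, path_dist hk1, path_dist hk1]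
        simp only [Fin.val_zero]
        omega
      · obtain ⟨c, hc⟩ := cyc_extend hn b a
        refine ⟨(c, 0), Finset.mem_image_of_mem _ (Finset.mem_univ c), Or.inr ?_⟩
        rw [bp_dist hcyc hpath, bp_dist hcyc hpath, bp_dist hcyc hpath]
        rw [path_dist hk1, path_dist hk1, path_dist hk1]
        simp only [Fin.val_zero]
        omega
    · rw [Finset.card_image_of_injective _ (fun i j hij => (Prod.mk.injEq _ _ _ _).mp hij |>.1),
        Finset.card_univ, Fintype.card_fin]
  · -- lower bound
    rintro m ⟨Q, hQ, rfl⟩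
    set last : Fin k := ⟨k - 1, by omega⟩ with hlast
    have hlv : last.val = k - 1 := rfl
    set P : Fin n → Fin n × Fin k := fun i => (i, (0 : Fin k)) with hP
    set R : Fin n → Fin n × Fin k := fun i => (i + ((n / 2 : ℕ) : Fin n), last) with hR
    have hbound : ∀ x y : Fin n × Fin k,
        (cycleGraph n □ pathGraph k).dist x y ≤ n / 2 + (k - 1) := by
      intro x y
      rw [bp_dist hcyc hpath, path_dist hk1, cyc_dist hn]
      have h1 := (y.1 - x.1).is_lt
      have h2 := x.2.is_lt
      have h3 := y.2.is_lt
      omega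
    have hqp : ∀ i : Fin n,
        (cycleGraph n □ pathGraph k).dist (R i) (P i) = n / 2 + (k - 1) := by
      intro i
      rw [bp_dist hcyc hpath]
      simp only [hP, hR]
      rw [SimpleGraph.dist_comm (G := cycleGraph n), cyc_dist_cast hn i (n / 2) le_rfl,
        path_dist hk1]
      simp only [Fin.val_zero]
      omega
    have hsel : ∀ i : Fin n, ∃ x, x ∈ Q ∧ (x = P i ∨ x = R i) := by
      intro i
      have hne : P i ≠ R i := by
        intro he
        have h2 := congrArg Fin.val (congrArg Prod.snd he)
        simp only [hP, hR, Fin.val_zero] at h2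
        omega
      obtain ⟨r, hrQ, hcase⟩ := hQ (P i) (R i) hne
      rcases hcase with h1 | h1
      · -- dist (R i) r = dist (R i) (P i) + dist (P i) r
        have h2 := hbound (R i) r
        rw [h1, hqp i] at h2
        have h3 : (cycleGraph n □ pathGraph k).dist (P i) r = 0 := by omega
        have h4 : P i = r := (hconn.dist_eq_zero_iff).mp h3
        exact ⟨r, hrQ, Or.inl h4.symm⟩
      · have h2 := hbound (P i) r
        have h5 : (cycleGraph n □ pathGraph k).dist (P i) (R i) = n / 2 + (k - 1) := by
          rw [SimpleGraph.dist_comm]; exact hqp i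
        rw [h1, h5] at h2
        have h3 : (cycleGraph n □ pathGraph k).dist (R i) r = 0 := by omega
        have h4 : R i = r := (hconn.dist_eq_zero_iff).mp h3
        exact ⟨r, hrQ, Or.inr h4.symm⟩
    choose f hfQ hfPR using hsel
    have hcard : (Finset.univ : Finset (Fin n)).card ≤ Q.card := by
      refine Finset.card_le_card_of_injOn f (fun i _ => hfQ i) ?_
      intro i _ j _ hij
      rcases hfPR i with hi | hi <;> rcases hfPR j with hj | hj <;>
        rw [hi, hj] at hij
      · exact congrArg Prod.fst hij
      · exfalso
        have h2 := congrArg Fin.val (congrArg Prod.snd hij)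
        simp only [hP, hR, Fin.val_zero] at h2
        omega
      · exfalso
        have h2 := congrArg Fin.val (congrArg Prod.snd hij)
        simp only [hP, hR, Fin.val_zero] at h2
        omega
      · have h2 := congrArg Prod.fst hij
        simp only [hP, hR] at h2
        exact add_right_cancel h2
    rwa [Finset.card_univ, Fintype.card_fin] at hcard
end

section
/- For n ≥ 5, no subset of V_2 of size n−2 in which the pairwise distances are all equal to 2 can be a doubly resolving set of H(n). -/
open SimpleGraph

/-- The graph `H(n)`: the incidence graph of the complete graph `K_n`. -/
def Hgraph (n : ℕ) : SimpleGraph (Fin n ⊕ {s : Finset (Fin n) // s.card = 2}) :=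
  SimpleGraph.fromRel (fun a b => ∃ r s, a = Sum.inl r ∧ b = Sum.inr s ∧ r ∈ s.1)

lemma adj_inl_inr {n : ℕ} (r : Fin n) (s : {s : Finset (Fin n) // s.card = 2}) :
    (Hgraph n).Adj (Sum.inl r) (Sum.inr s) ↔ r ∈ s.1 := by
  simp only [Hgraph, SimpleGraph.fromRel_adj]
  constructor
  · rintro ⟨-, ⟨r', s', h1, h2, h3⟩ | ⟨r', s', h1, h2, h3⟩⟩
    · cases h1; cases h2; exact h3
    · cases h1
  · intro h
    exact ⟨by simp, Or.inl ⟨r, s, rfl, rfl, h⟩⟩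

lemma adj_cases {n : ℕ} {a b} (h : (Hgraph n).Adj a b) :
    (∃ r s, a = Sum.inl r ∧ b = Sum.inr s) ∨ (∃ r s, a = Sum.inr s ∧ b = Sum.inl r) := by
  obtain ⟨-, ⟨r, s, h1, h2, -⟩ | ⟨r, s, h1, h2, -⟩⟩ := h
  · exact Or.inl ⟨r, s, h1, h2⟩
  · exact Or.inr ⟨r, s, h2, h1⟩

lemma mid_of_dist_two {V : Type*} {G : SimpleGraph V} {u v : V} (h : G.dist u v = 2) :
    ∃ m, G.Adj u m ∧ G.Adj m v := by
  obtain ⟨p, hp⟩ := SimpleGraph.exists_walk_of_dist_ne_zero (u := u) (v := v) (by rw [h]; omega)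
  rw [h] at hp
  have a1 := p.adj_getVert_succ (i := 0) (by omega)
  have a2 := p.adj_getVert_succ (i := 1) (by omega)
  rw [p.getVert_zero] at a1
  have h2 : p.getVert 2 = v := by rw [← hp]; exact p.getVert_length
  rw [h2] at a2
  exact ⟨p.getVert 1, a1, a2⟩

lemma dist_inl_inr_mem {n : ℕ} {r : Fin n} {s : {s : Finset (Fin n) // s.card = 2}}
    (h : r ∈ s.1) : (Hgraph n).dist (Sum.inl r) (Sum.inr s) = 1 :=
  SimpleGraph.dist_eq_one_iff_adj.mpr ((adj_inl_inr r s).mpr h)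

lemma dist_inl_inr_not_mem {n : ℕ} {r : Fin n} {s : {s : Finset (Fin n) // s.card = 2}}
    (h : r ∉ s.1) : (Hgraph n).dist (Sum.inl r) (Sum.inr s) = 3 := by
  obtain ⟨i, hi⟩ : s.1.Nonempty := Finset.card_pos.mp (by rw [s.2]; omega)
  have hri : r ≠ i := fun e => h (e ▸ hi)
  set t : {s : Finset (Fin n) // s.card = 2} := ⟨{r, i}, Finset.card_pair hri⟩ with ht
  have a1 : (Hgraph n).Adj (Sum.inl r) (Sum.inr t) := (adj_inl_inr r t).mpr (by simp [ht])
  have a2 : (Hgraph n).Adj (Sum.inr t) (Sum.inl i) := ((adj_inl_inr i t).mpr (by simp [ht])).symm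
  have a3 : (Hgraph n).Adj (Sum.inl i) (Sum.inr s) := (adj_inl_inr i s).mpr hi
  let p : (Hgraph n).Walk (Sum.inl r) (Sum.inr s) :=
    Walk.cons a1 (Walk.cons a2 (Walk.cons a3 Walk.nil))
  have hle : (Hgraph n).dist (Sum.inl r) (Sum.inr s) ≤ 3 := by
    simpa [p] using SimpleGraph.dist_le p
  have ne0 : (Hgraph n).dist (Sum.inl r) (Sum.inr s) ≠ 0 := by
    intro h0
    rw [SimpleGraph.dist_eq_zero_iff_eq_or_not_reachable] at h0
    rcases h0 with h0 | h0
    · simp at h0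
    · exact h0 p.reachable
  have ne1 : (Hgraph n).dist (Sum.inl r) (Sum.inr s) ≠ 1 := by
    intro h1
    rw [SimpleGraph.dist_eq_one_iff_adj, adj_inl_inr] at h1
    exact h h1
  have ne2 : (Hgraph n).dist (Sum.inl r) (Sum.inr s) ≠ 2 := by
    intro h2
    obtain ⟨m, b1, b2⟩ := mid_of_dist_two h2
    rcases adj_cases b1 with ⟨r', s', _, hm⟩ | ⟨r', s', hm, -⟩
    · rcases adj_cases b2 with ⟨r'', s'', hm', _⟩ | ⟨r'', s'', hm', hm''⟩
      · rw [hm] at hm'; exact absurd hm' (by simp)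
      · exact absurd hm'' (by simp)
    · exact absurd hm (by simp)
  omega

lemma adj_inr {n : ℕ} {s : {s : Finset (Fin n) // s.card = 2}} {m}
    (h : (Hgraph n).Adj (Sum.inr s) m) : ∃ r, m = Sum.inl r ∧ r ∈ s.1 := by
  obtain ⟨-, ⟨r', s', h1, h2, h3⟩ | ⟨r', s', h1, h2, h3⟩⟩ := h
  · exact absurd h1 (by simp)
  · obtain rfl : s = s' := by simpa using h2
    exact ⟨r', h1, h3⟩

lemma mid_of_dist_two' {V : Type*} {G : SimpleGraph V} {u v : V} (h : G.dist u v = 2) :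
    ∃ m, G.Adj u m ∧ G.Adj m v := by
  obtain ⟨p, hp⟩ := SimpleGraph.exists_walk_of_dist_ne_zero (u := u) (v := v) (by rw [h]; omega)
  rw [h] at hp
  have a1 := p.adj_getVert_succ (i := 0) (by omega)
  have a2 := p.adj_getVert_succ (i := 1) (by omega)
  rw [p.getVert_zero] at a1
  have h2 : p.getVert 2 = v := by rw [← hp]; exact p.getVert_length
  rw [h2] at a2
  exact ⟨p.getVert 1, a1, a2⟩

lemma common_of_dist_two {n : ℕ} {x y : {s : Finset (Fin n) // s.card = 2}}
    (h : (Hgraph n).dist (Sum.inr x) (Sum.inr y) = 2) : ∃ a, a ∈ x.1 ∧ a ∈ y.1 := by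
  obtain ⟨m, b1, b2⟩ := mid_of_dist_two' h
  obtain ⟨r, rfl, hr⟩ := adj_inr b1
  obtain ⟨r', h', hr'⟩ := adj_inr b2.symm
  obtain rfl : r = r' := by simpa using h'
  exact ⟨r, hr, hr'⟩


theorem stmt16 (n : ℕ) (hn : 5 ≤ n) (Q : Finset {s : Finset (Fin n) // s.card = 2})
    (hQ : Q.card = n - 2)
    (hdist : ∀ x ∈ Q, ∀ y ∈ Q, x ≠ y → (Hgraph n).dist (Sum.inr x) (Sum.inr y) = 2) :
    ¬ IsDoublyResolving (Hgraph n) (Q.image Sum.inr) := by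
  intro hDR
  suffices h : ∃ (x y : Fin n) (cx cy : ℕ), x ≠ y ∧
      (∀ q ∈ Q, (Hgraph n).dist (Sum.inl x) (Sum.inr q) = cx) ∧
      (∀ q ∈ Q, (Hgraph n).dist (Sum.inl y) (Sum.inr q) = cy) by
    obtain ⟨x, y, cx, cy, hxy, hx, hy⟩ := h
    obtain ⟨u, hu, v, hv, hne⟩ := hDR (Sum.inl x) (Sum.inl y) (by simpa using hxy)
    rw [Finset.mem_image] at hu hv
    obtain ⟨qu, hqu, rfl⟩ := hu
    obtain ⟨qv, hqv, rfl⟩ := hv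
    apply hne
    rw [hx qu hqu, hx qv hqv, hy qu hqu, hy qv hqv]
    simp
  have hint : ∀ x ∈ Q, ∀ y ∈ Q, x ≠ y → ∃ a, a ∈ x.1 ∧ a ∈ y.1 :=
    fun x hx y hy hne => common_of_dist_two (hdist x hx y hy hne)
  obtain ⟨s1, hs1, s2, hs2, h12⟩ := Finset.one_lt_card.mp (show 1 < Q.card by omega)
  obtain ⟨a, ha1, ha2⟩ := hint s1 hs1 s2 hs2 h12
  -- s1 = {a, b}
  obtain ⟨b, hb⟩ := Finset.card_eq_one.mp
    (by rw [Finset.card_erase_of_mem ha1, s1.2] : (s1.1.erase a).card = 1)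
  have hs1eq : s1.1 = {a, b} := by
    rw [← Finset.insert_erase ha1, hb]
  have hab : a ≠ b := by
    have : b ∈ s1.1.erase a := by rw [hb]; exact Finset.mem_singleton_self b
    exact fun e => (Finset.mem_erase.mp this).1 e.symm
  obtain ⟨c, hc⟩ := Finset.card_eq_one.mp
    (by rw [Finset.card_erase_of_mem ha2, s2.2] : (s2.1.erase a).card = 1)
  have hs2eq : s2.1 = {a, c} := by
    rw [← Finset.insert_erase ha2, hc]
  have hac : a ≠ c := by
    have : c ∈ s2.1.erase a := by rw [hc]; exact Finset.mem_singleton_self c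
    exact fun e => (Finset.mem_erase.mp this).1 e.symm
  have hbc : b ≠ c := fun e => h12 (Subtype.ext (by rw [hs1eq, hs2eq, e]))
  by_cases hstar : ∀ t ∈ Q, a ∈ t.1
  · -- star case
    set U : Finset (Fin n) := insert a (Q.biUnion fun t => t.1.erase a) with hU
    have hsubU : ∀ t ∈ Q, t.1 ⊆ U := by
      intro t ht x hx
      rcases eq_or_ne x a with rfl | hxa
      · exact Finset.mem_insert_self _ _
      · exact Finset.mem_insert_of_mem
          (Finset.mem_biUnion.mpr ⟨t, ht, Finset.mem_erase.mpr ⟨hxa, hx⟩⟩)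
    have hUcard : U.card < n := by
      have h1 : (Q.biUnion fun t => t.1.erase a).card ≤ ∑ t ∈ Q, (t.1.erase a).card :=
        Finset.card_biUnion_le
      have h2 : ∑ t ∈ Q, (t.1.erase a).card = Q.card := by
        rw [Finset.sum_congr rfl fun t ht =>
          (by rw [Finset.card_erase_of_mem (hstar t ht), t.2] : (t.1.erase a).card = 1)]
        simp
      have h3 : U.card ≤ (Q.biUnion fun t => t.1.erase a).card + 1 := by
        rw [hU]; exact Finset.card_insert_le _ _
      omega
    obtain ⟨d, hd⟩ : (Uᶜ : Finset (Fin n)).Nonempty := by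
      rw [← Finset.card_pos, Finset.card_compl]
      simp only [Fintype.card_fin]
      omega
    rw [Finset.mem_compl] at hd
    have hda : a ≠ d := fun e => hd (e ▸ Finset.mem_insert_self _ _)
    exact ⟨a, d, 1, 3, hda, fun q hq => dist_inl_inr_mem (hstar q hq),
      fun q hq => dist_inl_inr_not_mem fun hm => hd (hsubU q hq hm)⟩
  · -- triangle case
    push_neg at hstar
    obtain ⟨t0, ht0Q, ht0a⟩ := hstar
    have ht0s1 : t0 ≠ s1 := fun e => ht0a (e ▸ ha1)
    have ht0s2 : t0 ≠ s2 := fun e => ht0a (e ▸ ha2)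
    have hbt0 : b ∈ t0.1 := by
      obtain ⟨e, he1, he2⟩ := hint s1 hs1 t0 ht0Q (Ne.symm ht0s1)
      rw [hs1eq] at he1
      rcases Finset.mem_insert.mp he1 with rfl | he1
      · exact absurd he2 ht0a
      · rwa [← Finset.mem_singleton.mp he1]
    have hct0 : c ∈ t0.1 := by
      obtain ⟨e, he1, he2⟩ := hint s2 hs2 t0 ht0Q (Ne.symm ht0s2)
      rw [hs2eq] at he1
      rcases Finset.mem_insert.mp he1 with rfl | he1
      · exact absurd he2 ht0a
      · rwa [← Finset.mem_singleton.mp he1]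
    have ht0eq : t0.1 = {b, c} := by
      refine (Finset.eq_of_subset_of_card_le ?_ ?_).symm
      · intro x hx
        rcases Finset.mem_insert.mp hx with rfl | hx
        · exact hbt0
        · exact Finset.mem_singleton.mp hx ▸ hct0
      · rw [t0.2, Finset.card_pair hbc]
    have habc : ∀ t ∈ Q, t.1 ⊆ ({a, b, c} : Finset (Fin n)) := by
      intro t ht
      by_cases hta : a ∈ t.1
      · have htt0 : t ≠ t0 := fun e => ht0a (e ▸ hta)
        obtain ⟨e, he1, he2⟩ := hint t ht t0 ht0Q htt0
        rw [ht0eq] at he2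
        have hae : a ≠ e := fun hh => by
          rw [← hh] at he2
          rcases Finset.mem_insert.mp he2 with h' | h'
          · exact hab h'
          · exact hac (Finset.mem_singleton.mp h')
        have hteq : t.1 = {a, e} := by
          refine (Finset.eq_of_subset_of_card_le ?_ ?_).symm
          · intro x hx
            rcases Finset.mem_insert.mp hx with rfl | hx
            · exact hta
            · exact Finset.mem_singleton.mp hx ▸ he1
          · rw [t.2, Finset.card_pair hae]
        rw [hteq]
        intro x hx
        rcases Finset.mem_insert.mp hx with rfl | hx
        · exact Finset.mem_insert_self _ _
        · rw [Finset.mem_singleton.mp hx]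
          rcases Finset.mem_insert.mp he2 with rfl | h'
          · simp
          · rw [Finset.mem_singleton.mp h']; simp
      · have hts1 : t ≠ s1 := fun e => hta (e ▸ ha1)
        have hts2 : t ≠ s2 := fun e => hta (e ▸ ha2)
        have hbt : b ∈ t.1 := by
          obtain ⟨e, he1, he2⟩ := hint s1 hs1 t ht (Ne.symm hts1)
          rw [hs1eq] at he1
          rcases Finset.mem_insert.mp he1 with rfl | he1
          · exact absurd he2 hta
          · rwa [← Finset.mem_singleton.mp he1]
        have hct : c ∈ t.1 := by
          obtain ⟨e, he1, he2⟩ := hint s2 hs2 t ht (Ne.symm hts2)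
          rw [hs2eq] at he1
          rcases Finset.mem_insert.mp he1 with rfl | he1
          · exact absurd he2 hta
          · rwa [← Finset.mem_singleton.mp he1]
        have hteq : t.1 = {b, c} := by
          refine (Finset.eq_of_subset_of_card_le ?_ ?_).symm
          · intro x hx
            rcases Finset.mem_insert.mp hx with rfl | hx
            · exact hbt
            · exact Finset.mem_singleton.mp hx ▸ hct
          · rw [t.2, Finset.card_pair hbc]
        rw [hteq]
        intro x hx
        rcases Finset.mem_insert.mp hx with rfl | hx
        · simp
        · rw [Finset.mem_singleton.mp hx]; simp
    obtain ⟨d, hd, e, he, hde⟩ := Finset.one_lt_card.mp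
      (show 1 < (({a, b, c} : Finset (Fin n))ᶜ).card by
        rw [Finset.card_compl]
        have : ({a, b, c} : Finset (Fin n)).card ≤ 3 := by
          apply le_trans (Finset.card_insert_le _ _)
          have := Finset.card_insert_le b ({c} : Finset (Fin n))
          simp at this ⊢
          omega
        simp only [Fintype.card_fin]
        omega)
    rw [Finset.mem_compl] at hd he
    exact ⟨d, e, 3, 3, hde, fun q hq => dist_inl_inr_not_mem fun hm => hd (habc q hq hm),
      fun q hq => dist_inl_inr_not_mem fun hm => he (habc q hq hm)⟩
end
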